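/- Fix real λ and real η, and let c = η·ln 2 + λπ/2 − σ_λ(η). For each sufficiently large n ∈ ℕ, let ρ₀(n) be the unique solution ρ₀ > max(η, 0) of ρ₀ − η·ln(ρ₀) = c + nπ. Then ρ₀(n) − nπ − η·ln(nπ) → c as n → ∞; in particular ρ₀(n)/(nπ) → 1, so ρ₀(n) = O(n). -/

import Mathlib

open Real Filter Asymptotics

private lemma aux_log_le_two_sqrt {x : ℝ} (hx : 1 ≤ x) :
    Real.log x ≤ 2 * Real.sqrt x := by
  have h0 : (0:ℝ) < x := by linarith
  have h1 : Real.log x = 2 * Real.log (Real.sqrt x) := by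
    rw [Real.log_sqrt h0.le]; ring
  have h2 : Real.log (Real.sqrt x) ≤ Real.sqrt x - 1 :=
    Real.log_le_sub_one_of_pos (Real.sqrt_pos.mpr h0)
  nlinarith [Real.sqrt_nonneg x]

private lemma aux_tendsto_sqrt_nat :
    Tendsto (fun n : ℕ => Real.sqrt n) atTop atTop := by
  have h1 : Tendsto (fun x : ℝ => Real.sqrt x) atTop atTop := by
    have := tendsto_rpow_atTop (y := (1/2 : ℝ)) (by norm_num)
    refine this.congr' ?_
    filter_upwards [eventually_ge_atTop (0:ℝ)] with x hx
    rw [Real.sqrt_eq_rpow]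
  exact h1.comp tendsto_natCast_atTop_atTop

set_option maxHeartbeats 1600000 in
/-- with c = η ln 2 + λπ/2 − σ_λ(η), if ρ₀(n) is (for all large n) the
solution ρ₀ > max(η,0) of ρ₀ − η ln ρ₀ = c + nπ, then ρ₀(n) − nπ − η ln(nπ) → c,
ρ₀(n)/(nπ) → 1, and ρ₀(n) = O(n). -/
theorem coulomb_rho0_asymptotics (lam η c : ℝ)
    (hc : c = η * Real.log 2 + lam * π / 2 -
      (Complex.Gamma ((lam : ℂ) + 1 + (η : ℂ) * Complex.I)).arg)
    (ρ₀ : ℕ → ℝ)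
    (h : ∀ᶠ n : ℕ in atTop,
      max η 0 < ρ₀ n ∧ ρ₀ n - η * Real.log (ρ₀ n) = c + n * π) :
    Tendsto (fun n : ℕ => ρ₀ n - n * π - η * Real.log (n * π)) atTop (nhds c) ∧
    Tendsto (fun n : ℕ => ρ₀ n / (n * π)) atTop (nhds 1) ∧
    (fun n : ℕ => ρ₀ n) =O[atTop] (fun n : ℕ => (n : ℝ)) := by
  set K : ℝ := 2*|c| + 4*η^2 + 2*π with hK
  have hπ : (0:ℝ) < π := Real.pi_pos
  have hKpos : 0 < K := by positivity
  -- eventually n ≥ 1 and c + nπ ≥ 2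
  have hbig : ∀ᶠ n : ℕ in atTop, (1:ℝ) ≤ (n:ℝ) ∧ (2:ℝ) ≤ c + n * π := by
    have h1 : Tendsto (fun n : ℕ => c + n * π) atTop atTop := by
      apply tendsto_atTop_add_const_left
      exact Tendsto.atTop_mul_const hπ tendsto_natCast_atTop_atTop
    filter_upwards [h1.eventually_ge_atTop 2,
      tendsto_natCast_atTop_atTop.eventually_ge_atTop (1:ℝ)] with n h2 h3
    exact ⟨h3, h2⟩
  -- key pointwise facts
  have key : ∀ᶠ n : ℕ in atTop,
      1 ≤ ρ₀ n ∧ ρ₀ n ≤ K * n ∧ (1:ℝ) ≤ (n:ℝ) ∧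
      ρ₀ n - η * Real.log (ρ₀ n) = c + n * π := by
    filter_upwards [h, hbig] with n ⟨hmax, heq⟩ ⟨hn1, h2c⟩
    have hρpos : 0 < ρ₀ n := lt_of_le_of_lt (le_max_right η 0) hmax
    have hηρ : η < ρ₀ n := lt_of_le_of_lt (le_max_left η 0) hmax
    -- step 1 : 1 ≤ ρ₀ n
    have hρ1 : 1 ≤ ρ₀ n := by
      by_contra hlt
      push_neg at hlt
      have hlog : Real.log (ρ₀ n) < 0 := Real.log_neg hρpos hlt
      have hA : ρ₀ n * (-Real.log (ρ₀ n)) ≤ 1 - ρ₀ n := by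
        have := Real.log_le_sub_one_of_pos (x := (ρ₀ n)⁻¹) (by positivity)
        rw [Real.log_inv] at this
        have h2 := mul_le_mul_of_nonneg_left this hρpos.le
        have : ρ₀ n * (ρ₀ n)⁻¹ = 1 := mul_inv_cancel₀ hρpos.ne'
        nlinarith
      rcases le_or_gt 0 η with hη | hη
      · have : η * (-Real.log (ρ₀ n)) ≤ ρ₀ n * (-Real.log (ρ₀ n)) :=
          mul_le_mul_of_nonneg_right hηρ.le (by linarith)
        linarith
      · have : η * Real.log (ρ₀ n) > 0 := mul_pos_of_neg_of_neg hη hlog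
        linarith
    -- step 2 : ρ₀ n ≤ K * n
    have hlog0 : 0 ≤ Real.log (ρ₀ n) := Real.log_nonneg hρ1
    have hsq : Real.log (ρ₀ n) ≤ 2 * Real.sqrt (ρ₀ n) := aux_log_le_two_sqrt hρ1
    have hsqs : Real.sqrt (ρ₀ n) ^ 2 = ρ₀ n := Real.sq_sqrt hρpos.le
    have hub : η * Real.log (ρ₀ n) ≤ ρ₀ n / 2 + 2 * η^2 := by
      have h1 : η * Real.log (ρ₀ n) ≤ |η| * Real.log (ρ₀ n) :=
        mul_le_mul_of_nonneg_right (le_abs_self η) hlog0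
      have h2 : |η| * (2 * Real.sqrt (ρ₀ n)) ≤ ρ₀ n / 2 + 2 * η^2 := by
        nlinarith [sq_nonneg (Real.sqrt (ρ₀ n) - 2 * |η|), sq_abs η,
          abs_nonneg η, Real.sqrt_nonneg (ρ₀ n)]
      have h3 : |η| * Real.log (ρ₀ n) ≤ |η| * (2 * Real.sqrt (ρ₀ n)) :=
        mul_le_mul_of_nonneg_left hsq (abs_nonneg η)
      linarith
    have hKn : ρ₀ n ≤ K * n := by
      have hcle : c ≤ |c| := le_abs_self c
      nlinarith [mul_le_mul_of_nonneg_left hn1 (by positivity : (0:ℝ) ≤ 2*|c| + 4*η^2)]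
    exact ⟨hρ1, hKn, hn1, heq⟩
  -- the remainder g n := (c + η log ρ₀ n)/(n π) tends to 0
  have hg : Tendsto (fun n : ℕ => (c + η * Real.log (ρ₀ n)) / (n * π)) atTop (nhds 0) := by
    set M : ℝ := |c| + 2 * |η| * Real.sqrt K with hM
    have hM0 : 0 ≤ M := by positivity
    apply squeeze_zero_norm' (a := fun n : ℕ => (M / π) / Real.sqrt n)
    · filter_upwards [key] with n ⟨hρ1, hKn, hn1, heq⟩
      have hn0 : (0:ℝ) < n := by linarith
      have hsn : (1:ℝ) ≤ Real.sqrt n := by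
        rw [show (1:ℝ) = Real.sqrt 1 by simp]
        exact Real.sqrt_le_sqrt hn1
      have hsn0 : 0 < Real.sqrt n := by linarith
      have hsqmul : Real.sqrt n * Real.sqrt n = n := Real.mul_self_sqrt hn0.le
      have hlog0 : 0 ≤ Real.log (ρ₀ n) := Real.log_nonneg hρ1
      have hlogb : Real.log (ρ₀ n) ≤ 2 * Real.sqrt K * Real.sqrt n := by
        calc Real.log (ρ₀ n) ≤ 2 * Real.sqrt (ρ₀ n) := aux_log_le_two_sqrt hρ1
          _ ≤ 2 * Real.sqrt (K * n) := by
              have := Real.sqrt_le_sqrt hKn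
              linarith
          _ = 2 * Real.sqrt K * Real.sqrt n := by
              rw [Real.sqrt_mul hKpos.le]; ring
      have hnum : |c + η * Real.log (ρ₀ n)| ≤ M * Real.sqrt n := by
        have h1 : |c + η * Real.log (ρ₀ n)| ≤ |c| + |η| * Real.log (ρ₀ n) := by
          calc |c + η * Real.log (ρ₀ n)| ≤ |c| + |η * Real.log (ρ₀ n)| := abs_add_le _ _
            _ = |c| + |η| * Real.log (ρ₀ n) := by rw [abs_mul, abs_of_nonneg hlog0]
        have h2 : |η| * Real.log (ρ₀ n) ≤ |η| * (2 * Real.sqrt K * Real.sqrt n) :=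
          mul_le_mul_of_nonneg_left hlogb (abs_nonneg η)
        have h3 : |c| ≤ |c| * Real.sqrt n := by
          nlinarith [abs_nonneg c]
        nlinarith [Real.sqrt_nonneg K, abs_nonneg η]
      rw [Real.norm_eq_abs, abs_div, abs_of_pos (by positivity : (0:ℝ) < n * π)]
      rw [div_le_div_iff₀ (by positivity) hsn0]
      calc |c + η * Real.log (ρ₀ n)| * Real.sqrt n ≤ M * Real.sqrt n * Real.sqrt n := by
            exact mul_le_mul_of_nonneg_right hnum hsn0.le
        _ = M * n := by rw [mul_assoc, hsqmul]
        _ = M / π * (n * π) := by field_simp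
        _ = M / π * (n * π) := rfl
    · exact Tendsto.div_atTop tendsto_const_nhds aux_tendsto_sqrt_nat
  -- statement (2)
  have T2 : Tendsto (fun n : ℕ => ρ₀ n / (n * π)) atTop (nhds 1) := by
    have : Tendsto (fun n : ℕ => 1 + (c + η * Real.log (ρ₀ n)) / (n * π)) atTop (nhds 1) := by
      have := tendsto_const_nhds (x := (1:ℝ)) (f := atTop (α := ℕ)) |>.add hg
      simpa using this
    refine this.congr' ?_
    filter_upwards [key] with n ⟨hρ1, hKn, hn1, heq⟩
    have hn0 : (0:ℝ) < (n:ℝ) * π := by positivity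
    field_simp
    linarith
  refine ⟨?_, T2, ?_⟩
  · -- statement (1)
    have hlog1 : Tendsto (fun n : ℕ => Real.log (ρ₀ n / (n * π))) atTop (nhds 0) := by
      have hcont : ContinuousAt Real.log 1 := Real.continuousAt_log one_ne_zero
      have := hcont.tendsto.comp T2
      simpa [Function.comp_def] using this
    have : Tendsto (fun n : ℕ => c + η * Real.log (ρ₀ n / (n * π))) atTop (nhds c) := by
      have := tendsto_const_nhds (x := c) (f := atTop (α := ℕ)) |>.add
        ((tendsto_const_nhds (x := η)).mul hlog1)
      simpa using this
    refine this.congr' ?_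
    filter_upwards [key] with n ⟨hρ1, hKn, hn1, heq⟩
    have hρpos : (0:ℝ) < ρ₀ n := by linarith
    have hn0 : (0:ℝ) < (n:ℝ) * π := by positivity
    rw [Real.log_div hρpos.ne' hn0.ne']
    have : ρ₀ n - (n:ℝ) * π = c + η * Real.log (ρ₀ n) := by linarith
    ring_nf
    nlinarith [this]
  · -- statement (3)
    rw [isBigO_iff]
    refine ⟨K, ?_⟩
    filter_upwards [key] with n ⟨hρ1, hKn, hn1, heq⟩
    have h1 : (0:ℝ) ≤ ρ₀ n := by linarith
    have h2 : (0:ℝ) ≤ (n:ℝ) := by linarith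
    rw [Real.norm_eq_abs, Real.norm_eq_abs, abs_of_nonneg h1, abs_of_nonneg h2]
    exact hKn
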